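/- arXiv:1305.4361 — 5 statements merged into one kernel-verified Lean document; each statement's English description precedes it below -/
import Mathlib

section
/- Let (Ω,ℱ,ℙ) be a probability space and (ε_n)_{n ∈ ℕ, n squarefree} a mutually independent family of real random variables with ℙ(ε_n = 1) = ℙ(ε_n = −1) = 1/2 for each squarefree n; define μ_rand(n)(ω) = ε_n(ω) if n is squarefree and μ_rand(n)(ω) = 0 otherwise. Let X be a compact metric space and T : X → X a homeomorphism whose topological entropy is zero. Then there exists a measurable set Ω′ ⊆ Ω with ℙ(Ω′) = 1 such that for every ω ∈ Ω′, every x ∈ X and every continuous function f : X → ℂ, (1/N) ∑_{n=1}^{N} f(Tⁿx) μ_rand(n)(ω) → 0 as N → ∞. -/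
open scoped BigOperators
open MeasureTheory

/-- `coverNum T m ε` is the minimal cardinality of a finite set of points whose
`d_m`-balls of radius `ε` cover `X`, where `d_m(x,y) = max_{0 ≤ k ≤ m−1} d(T^k x, T^k y)`. -/
noncomputable def coverNum {X : Type*} [MetricSpace X] (T : X → X) (m : ℕ) (ε : ℝ) : ℕ :=
  sInf {r : ℕ | ∃ s : Finset X, s.card = r ∧
    ∀ x : X, ∃ y ∈ s, ∀ k < m, dist (T^[k] x) (T^[k] y) < ε}

/-- `(X,T)` has zero topological entropy: for every `η > 0` there are `ε₀ > 0` and `M₀` such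
that `r(m,ε) < e^{mη}` for all `0 < ε < ε₀` and all `m > M₀`. -/
def ZeroTopEntropy {X : Type*} [MetricSpace X] (T : X → X) : Prop :=
  ∀ η : ℝ, 0 < η → ∃ ε₀ : ℝ, 0 < ε₀ ∧ ∃ M₀ : ℕ,
    ∀ ε : ℝ, 0 < ε → ε < ε₀ → ∀ m : ℕ, M₀ < m →
      (coverNum T m ε : ℝ) < Real.exp (m * η)

/-!
For continuous `f` and a point `y`, the sum `∑_{n ≤ N} f(Tⁿ y) μ(n)` is a Rademacher sum with
coefficients bounded by `‖f‖`, so by Hoeffding it exceeds `Nδ` with probability at most `4 e^{-cN}`.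
Zero entropy makes the minimal covers of `X` by Bowen balls of length `N` and a fixed radius
of subexponential size, so a union bound over their centres is summable in `N`; Borel–Cantelli and
uniform continuity of `f` then give, almost surely, `|∑_{n ≤ N} f(Tⁿ x) μ(n)| ≤ 2Nδ` for all `x`
and all large `N`. Countably many `δ` and a countable dense set of `f` leave a single null set, and
the averages are `1`-Lipschitz in `f` for the sup norm.
-/

open Filter Topology Finset
open scoped NNReal

namespace ProbabilityTheory

variable {Ω : Type*} [MeasurableSpace Ω]

def IsRademacher (P : Measure Ω) (g : Ω → ℝ) : Prop :=
  P {ω | g ω = 1} = 1 / 2 ∧ P {ω | g ω = -1} = 1 / 2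

structure IsRademacherFamily {ι : Type*} (P : Measure Ω) (g : ι → Ω → ℝ) : Prop where
  measurable : ∀ i, Measurable (g i)
  indep : iIndepFun g P
  isRademacher : ∀ i, IsRademacher P (g i)

variable {P : Measure Ω}

namespace IsRademacher

variable [IsProbabilityMeasure P] {g : Ω → ℝ}

lemma ae_eq_one_or_eq_neg_one (hg : Measurable g) (h : IsRademacher P g) :
    ∀ᵐ ω ∂P, g ω = 1 ∨ g ω = -1 := by
  have hdisj : Disjoint {ω | g ω = 1} {ω | g ω = -1} :=
    Set.disjoint_left.2 fun ω (h₁ : g ω = 1) (h₂ : g ω = -1) => by linarith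
  have hS₁ : MeasurableSet {ω | g ω = 1} := hg (measurableSet_singleton 1)
  have hS₂ : MeasurableSet {ω | g ω = -1} := hg (measurableSet_singleton (-1))
  refine mem_ae_iff.2 ((prob_compl_eq_zero_iff (hS₁.union hS₂)).2 ?_)
  rw [measure_union hdisj hS₂, h.1, h.2, ENNReal.add_halves]

lemma integral_eq_zero (hg : Measurable g) (h : IsRademacher P g) : ∫ ω, g ω ∂P = 0 := by
  have hS₁ : MeasurableSet {ω | g ω = 1} := hg (measurableSet_singleton 1)
  have hS₂ : MeasurableSet {ω | g ω = -1} := hg (measurableSet_singleton (-1))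
  have hae : g =ᵐ[P] fun ω => {ω | g ω = 1}.indicator 1 ω - {ω | g ω = -1}.indicator 1 ω := by
    filter_upwards [h.ae_eq_one_or_eq_neg_one hg] with ω hω
    rcases hω with hω | hω <;> norm_num [Set.indicator, hω]
  rw [integral_congr_ae hae, integral_sub ((integrable_const 1).indicator hS₁)
    ((integrable_const 1).indicator hS₂), integral_indicator_one hS₁, integral_indicator_one hS₂,
    measureReal_def, measureReal_def, h.1, h.2, sub_self]

/-- Hoeffding's lemma: `c g` is centred and takes values in `[-C, C]`. -/
lemma hasSubgaussianMGF_const_mul (hg : Measurable g) (h : IsRademacher P g) {c : ℝ} {C : ℝ≥0}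
    (hc : |c| ≤ C) : HasSubgaussianMGF (fun ω => c * g ω) (C ^ 2) P := by
  have hbound : ∀ᵐ ω ∂P, c * g ω ∈ Set.Icc (-(C : ℝ)) C := by
    filter_upwards [h.ae_eq_one_or_eq_neg_one hg] with ω hω
    rcases hω with hω | hω <;> rw [hω, Set.mem_Icc] <;> constructor <;> linarith [abs_le.1 hc]
  convert hasSubgaussianMGF_of_mem_Icc_of_integral_eq_zero (hg.const_mul c).aemeasurable hbound
    (by rw [integral_const_mul, h.integral_eq_zero hg, mul_zero]) using 1
  ext
  simp [Real.norm_eq_abs, abs_of_nonneg]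

end IsRademacher

lemma HasSubgaussianMGF.mono {X : Ω → ℝ} {c c' : ℝ≥0} (h : HasSubgaussianMGF X c P)
    (hc : c ≤ c') : HasSubgaussianMGF X c' P :=
  ⟨h.integrable_exp_mul, fun t => (h.mgf_le t).trans (Real.exp_le_exp.2 (by gcongr))⟩

namespace IsRademacherFamily

variable [IsProbabilityMeasure P] {ι : Type*} {g : ι → Ω → ℝ} {s : Finset ι} {n : ℕ}
  {C : ℝ≥0} {a : ℝ}

lemma measureReal_le_sum_le (hg : IsRademacherFamily P g) (hs : #s ≤ n) {c : ι → ℝ}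
    (hc : ∀ i ∈ s, |c i| ≤ C) (ha : 0 ≤ a) :
    P.real {ω | a ≤ ∑ i ∈ s, c i * g i ω} ≤ Real.exp (-a ^ 2 / (2 * (n * C ^ 2))) := by
  have hsum := HasSubgaussianMGF.sum_of_iIndepFun
    (hg.indep.comp (fun i x => c i * x) fun i => measurable_const_mul (c i))
    fun i hi => (hg.isRademacher i).hasSubgaussianMGF_const_mul (hg.measurable i) (hc i hi)
  rw [sum_const, nsmul_eq_mul] at hsum
  have hmono := hsum.mono (c' := n * C ^ 2) (by gcongr)
  exact_mod_cast hmono.measure_ge_le ha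

lemma measureReal_le_abs_sum_le (hg : IsRademacherFamily P g) (hs : #s ≤ n) {c : ι → ℝ}
    (hc : ∀ i ∈ s, |c i| ≤ C) (ha : 0 ≤ a) :
    P.real {ω | a ≤ |∑ i ∈ s, c i * g i ω|} ≤ 2 * Real.exp (-a ^ 2 / (2 * (n * C ^ 2))) := by
  have hsplit : {ω | a ≤ |∑ i ∈ s, c i * g i ω|} ⊆
      {ω | a ≤ ∑ i ∈ s, c i * g i ω} ∪ {ω | a ≤ ∑ i ∈ s, -c i * g i ω} := by
    intro ω (hω : a ≤ |_|)
    refine (le_abs.1 hω).imp id fun h => ?_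
    simpa only [Set.mem_ofPred, neg_mul, sum_neg_distrib] using h
  calc _ ≤ _ := measureReal_mono hsplit
    _ ≤ _ := measureReal_union_le _ _
    _ ≤ _ := add_le_add (hg.measureReal_le_sum_le hs hc ha)
        (hg.measureReal_le_sum_le hs (fun i hi => (abs_neg (c i)).trans_le (hc i hi)) ha)
    _ = _ := (two_mul _).symm

lemma measureReal_le_norm_sum_le (hg : IsRademacherFamily P g) (hs : #s ≤ n) {z : ι → ℂ}
    (hz : ∀ i ∈ s, ‖z i‖ ≤ C) (ha : 0 ≤ a) :
    P.real {ω | a ≤ ‖∑ i ∈ s, z i * g i ω‖} ≤ 4 * Real.exp (-a ^ 2 / (8 * (n * C ^ 2))) := by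
  have hsplit : {ω | a ≤ ‖∑ i ∈ s, z i * g i ω‖} ⊆
      {ω | a / 2 ≤ |∑ i ∈ s, (z i).re * g i ω|} ∪ {ω | a / 2 ≤ |∑ i ∈ s, (z i).im * g i ω|} := by
    intro ω (hω : a ≤ ‖_‖)
    have hre : (∑ i ∈ s, z i * g i ω).re = ∑ i ∈ s, (z i).re * g i ω := by
      simp [Complex.re_sum]
    have him : (∑ i ∈ s, z i * g i ω).im = ∑ i ∈ s, (z i).im * g i ω := by
      simp [Complex.im_sum]
    have hnorm := Complex.norm_le_abs_re_add_abs_im (∑ i ∈ s, z i * g i ω)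
    rw [hre, him] at hnorm
    by_contra! h
    have h₁ : |∑ i ∈ s, (z i).re * g i ω| < a / 2 := not_le.1 fun h' => h (Or.inl h')
    have h₂ : |∑ i ∈ s, (z i).im * g i ω| < a / 2 := not_le.1 fun h' => h (Or.inr h')
    linarith
  have hexp : -(a / 2) ^ 2 / (2 * (n * C ^ 2)) = -a ^ 2 / (8 * (n * C ^ 2)) := by ring
  calc _ ≤ _ := measureReal_mono hsplit
    _ ≤ _ := measureReal_union_le _ _
    _ ≤ _ := add_le_add
        (hg.measureReal_le_abs_sum_le hs (fun i hi => (Complex.abs_re_le_norm _).trans (hz i hi))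
          (by positivity))
        (hg.measureReal_le_abs_sum_le hs (fun i hi => (Complex.abs_im_le_norm _).trans (hz i hi))
          (by positivity))
    _ = _ := by rw [hexp]; ring

end IsRademacherFamily

end ProbabilityTheory

namespace MeasureTheory

variable {Ω : Type*} [MeasurableSpace Ω] {P : Measure Ω} [IsFiniteMeasure P]

lemma ae_eventually_notMem_of_eventually_measureReal_le {s : ℕ → Set Ω} {u : ℕ → ℝ}
    (hu : Summable u) (hs : ∀ᶠ n in atTop, P.real (s n) ≤ u n) :
    ∀ᵐ ω ∂P, ∀ᶠ n in atTop, ω ∉ s n := by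
  have hsum : Summable fun n => P.real (s n) := hu.of_norm_bounded_eventually_nat <| by
    filter_upwards [hs] with n hn
    rwa [Real.norm_of_nonneg measureReal_nonneg]
  refine ae_eventually_notMem (ne_of_eq_of_ne ?_ hsum.tsum_ofReal_ne_top)
  exact tsum_congr fun n => (ofReal_measureReal (measure_ne_top P _)).symm

end MeasureTheory

lemma tendsto_inv_mul_of_forall_eventually_norm_le {u : ℕ → ℂ}
    (h : ∀ k : ℕ, ∀ᶠ N in atTop, ‖u N‖ ≤ N * (1 / (k + 1))) :
    Tendsto (fun N : ℕ => (N : ℂ)⁻¹ * u N) atTop (𝓝 0) := by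
  refine Metric.tendsto_nhds.2 fun ρ hρ => ?_
  obtain ⟨k, hk⟩ := exists_nat_one_div_lt hρ
  filter_upwards [h k] with N hN
  rw [dist_zero_right, norm_mul, norm_inv, Complex.norm_natCast]
  calc (N : ℝ)⁻¹ * ‖u N‖ ≤ (N : ℝ)⁻¹ * (N * (1 / (k + 1))) := by gcongr
    _ ≤ 1 / (k + 1) := by
        rw [← mul_assoc]
        exact mul_le_of_le_one_left (by positivity) (inv_mul_le_one_of_le₀ le_rfl (by positivity))
    _ < ρ := hk

section WeightedBirkhoffSum

variable {X : Type*}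

/-- Unlike `birkhoffSum`, the sum runs over `1 ≤ n ≤ N`. -/
noncomputable def weightedBirkhoffSum (T : X → X) (f : X → ℂ) (w : ℕ → ℝ) (x : X) (N : ℕ) : ℂ :=
  ∑ n ∈ Icc 1 N, f (T^[n] x) * (w n : ℂ)

lemma norm_weightedBirkhoffSum_sub_le (T : X → X) {f g : X → ℂ} {w : ℕ → ℝ}
    (hw : ∀ n, |w n| ≤ 1) {x y : X} {N : ℕ} {η : ℝ}
    (h : ∀ n ∈ Icc 1 N, ‖f (T^[n] x) - g (T^[n] y)‖ ≤ η) :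
    ‖weightedBirkhoffSum T f w x N - weightedBirkhoffSum T g w y N‖ ≤ N * η := by
  unfold weightedBirkhoffSum
  rw [← sum_sub_distrib]
  calc _ ≤ ∑ n ∈ Icc 1 N, ‖f (T^[n] x) * (w n : ℂ) - g (T^[n] y) * (w n : ℂ)‖ := norm_sum_le _ _
    _ ≤ ∑ _n ∈ Icc 1 N, η := sum_le_sum fun n hn => by
        rw [← sub_mul, norm_mul, Complex.norm_real, Real.norm_eq_abs]
        exact (mul_le_of_le_one_right (norm_nonneg _) (hw n)).trans (h n hn)
    _ = N * η := by simp

/-- The averages `f ↦ N⁻¹ S_N f` are `1`-Lipschitz on `C(X, ℂ)`, hence equicontinuous, so the set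
of `f` along which they tend to `0` is closed. -/
lemma tendsto_inv_mul_weightedBirkhoffSum_of_dense [MetricSpace X] [CompactSpace X] (T : X → X)
    {D : Set C(X, ℂ)} (hD : Dense D) {w : ℕ → ℝ} (hw : ∀ n, |w n| ≤ 1) (x : X)
    (h : ∀ g ∈ D, Tendsto (fun N : ℕ => (N : ℂ)⁻¹ * weightedBirkhoffSum T g w x N) atTop (𝓝 0))
    (f : C(X, ℂ)) :
    Tendsto (fun N : ℕ => (N : ℂ)⁻¹ * weightedBirkhoffSum T f w x N) atTop (𝓝 0) := by
  have hlip : ∀ N : ℕ, LipschitzWith 1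
      fun g : C(X, ℂ) => (N : ℂ)⁻¹ * weightedBirkhoffSum T g w x N := by
    refine fun N => LipschitzWith.of_dist_le_mul fun g₁ g₂ => ?_
    rw [dist_eq_norm, ← mul_sub, norm_mul, norm_inv, Complex.norm_natCast, NNReal.coe_one,
      one_mul]
    calc (N : ℝ)⁻¹ * _ ≤ (N : ℝ)⁻¹ * (N * dist g₁ g₂) := by
          gcongr
          exact norm_weightedBirkhoffSum_sub_le T hw fun n _ =>
            (dist_eq_norm _ _).symm.trans_le (ContinuousMap.dist_apply_le_dist _)
      _ ≤ dist g₁ g₂ := by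
          rw [← mul_assoc]
          exact mul_le_of_le_one_left dist_nonneg (inv_mul_le_one_of_le₀ le_rfl (by positivity))
  have hclosed := ((LipschitzWith.uniformEquicontinuous _ 1 hlip).equicontinuous
    ).isClosed_setOfPred_tendsto (l := atTop) (f := fun _ => (0 : ℂ)) continuous_const
  exact hclosed.closure_subset_iff.2 h (hD.closure_eq ▸ Set.mem_univ f)

end WeightedBirkhoffSum

section ZeroTopEntropy

variable {X : Type*} [MetricSpace X] [CompactSpace X] {T : X → X}

lemma exists_finset_card_eq_coverNum (hT : Continuous T) (m : ℕ) {r : ℝ} (hr : 0 < r) :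
    ∃ s : Finset X, #s = coverNum T m r ∧
      ∀ x, ∃ y ∈ s, ∀ k < m, dist (T^[k] x) (T^[k] y) < r := by
  refine Nat.sInf_mem (s := {n | ∃ s : Finset X, #s = n ∧ _}) ?_
  have hopen : ∀ y : X, IsOpen {x | ∀ k ∈ Finset.range m, dist (T^[k] x) (T^[k] y) < r} := by
    intro y
    simp only [Set.ofPred_forall]
    exact isOpen_biInter_finset fun k _ =>
      isOpen_lt ((hT.iterate k).dist continuous_const) continuous_const
  obtain ⟨s, hs⟩ := isCompact_univ.elim_finite_subcover _ hopen fun x _ =>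
    Set.mem_iUnion.2 ⟨x, fun k _ => by simpa using hr⟩
  refine ⟨#s, s, rfl, fun x => ?_⟩
  obtain ⟨y, hy, hxy⟩ := Set.mem_iUnion₂.1 (hs (Set.mem_univ x))
  exact ⟨y, hy, fun k hk => hxy k (Finset.mem_range.2 hk)⟩

lemma coverNum_le_coverNum (hT : Continuous T) (m : ℕ) {r r' : ℝ} (hr' : 0 < r') (h : r' ≤ r) :
    coverNum T m r ≤ coverNum T m r' := by
  obtain ⟨s, hcard, hcover⟩ := exists_finset_card_eq_coverNum hT m hr'
  refine Nat.sInf_le ⟨s, hcard, fun x => ?_⟩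
  obtain ⟨y, hy, hxy⟩ := hcover x
  exact ⟨y, hy, fun k hk => (hxy k hk).trans_le h⟩

lemma ZeroTopEntropy.eventually_coverNum_lt_exp (hent : ZeroTopEntropy T) (hT : Continuous T)
    {r : ℝ} (hr : 0 < r) {η : ℝ} (hη : 0 < η) :
    ∀ᶠ m : ℕ in atTop, (coverNum T m r : ℝ) < Real.exp (m * η) := by
  obtain ⟨r₀, hr₀, M, hM⟩ := hent η hη
  have hr' : 0 < min r (r₀ / 2) := lt_min hr (by positivity)
  filter_upwards [eventually_gt_atTop M] with m hm
  refine lt_of_le_of_lt ?_ (hM _ hr' ((min_le_right _ _).trans_lt (by linarith)) m hm)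
  exact_mod_cast coverNum_le_coverNum hT m hr' (min_le_left _ _)

end ZeroTopEntropy

namespace ProbabilityTheory.IsRademacherFamily

variable {Ω : Type*} [MeasurableSpace Ω] {P : Measure Ω} [IsProbabilityMeasure P]
  {p : ℕ → Prop} [DecidablePred p] {ε : ℕ → Ω → ℝ} {X : Type*}

lemma ae_forall_abs_ite_le_one (hε : IsRademacherFamily P fun n : {n // p n} => ε n) :
    ∀ᵐ ω ∂P, ∀ n, |if p n then ε n ω else 0| ≤ 1 := by
  have hae := ae_all_iff.2 fun n : {n // p n} =>
    (hε.isRademacher n).ae_eq_one_or_eq_neg_one (hε.measurable n)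
  filter_upwards [hae] with ω hω n
  split_ifs with hn
  · rcases hω ⟨n, hn⟩ with h | h <;> simp [h]
  · simp

lemma measureReal_le_norm_weightedBirkhoffSum_le
    (hε : IsRademacherFamily P fun n : {n // p n} => ε n) (T : X → X) {f : X → ℂ} {C : ℝ≥0}
    (hf : ∀ x, ‖f x‖ ≤ C) (x : X) (N : ℕ) {a : ℝ} (ha : 0 ≤ a) :
    P.real {ω | a ≤ ‖weightedBirkhoffSum T f (fun n => if p n then ε n ω else 0) x N‖} ≤
      4 * Real.exp (-a ^ 2 / (8 * (N * C ^ 2))) := by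
  have hsum : ∀ ω, weightedBirkhoffSum T f (fun n => if p n then ε n ω else 0) x N =
      ∑ i ∈ (Icc 1 N).subtype p, f (T^[i] x) * ε i ω := by
    intro ω
    rw [weightedBirkhoffSum, sum_subtype_eq_sum_filter (f := fun n => f (T^[n] x) * ε n ω),
      sum_filter]
    exact sum_congr rfl fun n _ => by split_ifs <;> simp
  simp only [hsum]
  refine hε.measureReal_le_norm_sum_le ?_ (fun i _ => hf _) ha
  simpa using (card_subtype p _).trans_le (card_filter_le (Icc 1 N) p)

lemma ae_eventually_forall_mem_norm_weightedBirkhoffSum_lt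
    (hε : IsRademacherFamily P fun n : {n // p n} => ε n) (T : X → X) {f : X → ℂ} {C : ℝ≥0}
    (hC : 0 < C) (hf : ∀ x, ‖f x‖ ≤ C) {t : ℕ → Finset X}
    (ht : ∀ η > 0, ∀ᶠ N in atTop, (#(t N) : ℝ) ≤ Real.exp (N * η)) {δ : ℝ} (hδ : 0 < δ) :
    ∀ᵐ ω ∂P, ∀ᶠ N in atTop, ∀ y ∈ t N,
      ‖weightedBirkhoffSum T f (fun n => if p n then ε n ω else 0) y N‖ < N * δ := by
  set S := fun ω y N => weightedBirkhoffSum T f (fun n => if p n then ε n ω else 0) y N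
  set β : ℝ := δ ^ 2 / (8 * C ^ 2)
  have hβ : 0 < β := by positivity
  set bad : ℕ → Set Ω := fun N => ⋃ y ∈ t N, {ω | N * δ ≤ ‖S ω y N‖}
  have hbad : ∀ᶠ N in atTop, P.real (bad N) ≤ 4 * Real.exp (-(β / 2)) ^ N := by
    filter_upwards [ht (β / 2) (half_pos hβ), eventually_gt_atTop 0] with N hcard hN
    have htail : ∀ y, P.real {ω | N * δ ≤ ‖S ω y N‖} ≤ 4 * Real.exp (-(N * β)) := by
      refine fun y => (hε.measureReal_le_norm_weightedBirkhoffSum_le T hf y N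
        (by positivity)).trans_eq ?_
      congr 2
      simp only [β]
      field_simp
    calc P.real (bad N) ≤ ∑ y ∈ t N, P.real {ω | N * δ ≤ ‖S ω y N‖} :=
          measureReal_biUnion_finset_le _ _
      _ ≤ #(t N) * (4 * Real.exp (-(N * β))) :=
          (sum_le_sum fun y _ => htail y).trans_eq (by rw [sum_const, nsmul_eq_mul])
      _ ≤ Real.exp (N * (β / 2)) * (4 * Real.exp (-(N * β))) := by gcongr
      _ = _ := by
          rw [← Real.exp_nat_mul, mul_left_comm, ← Real.exp_add]
          ring_nf
  have hsumm : Summable fun N : ℕ => 4 * Real.exp (-(β / 2)) ^ N :=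
    (summable_geometric_of_lt_one (Real.exp_nonneg _)
      (Real.exp_lt_one_iff.2 (by linarith))).mul_left _
  filter_upwards [ae_eventually_notMem_of_eventually_measureReal_le hsumm hbad] with ω hω
  filter_upwards [hω] with N hN y hy
  exact not_le.1 fun h => hN (Set.mem_biUnion hy h)

variable [MetricSpace X] [CompactSpace X] {T : X → X}

lemma ae_eventually_forall_norm_weightedBirkhoffSum_le
    (hε : IsRademacherFamily P fun n : {n // p n} => ε n) (hent : ZeroTopEntropy T)
    (hT : Continuous T) (f : C(X, ℂ)) {δ : ℝ} (hδ : 0 < δ) :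
    ∀ᵐ ω ∂P, ∀ᶠ N in atTop, ∀ x,
      ‖weightedBirkhoffSum T f (fun n => if p n then ε n ω else 0) x N‖ ≤ N * δ := by
  obtain ⟨r, hr, hfr⟩ := Metric.uniformContinuous_iff.1
    (CompactSpace.uniformContinuous_of_continuous f.continuous) (δ / 2) (by positivity)
  choose net hcard hcover using fun m => exists_finset_card_eq_coverNum hT m hr
  have hsubexp : ∀ η > 0, ∀ᶠ N in atTop, (#(net (N + 1)) : ℝ) ≤ Real.exp (N * η) := by
    intro η hη
    filter_upwards [(tendsto_add_atTop_nat 1).eventually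
      (hent.eventually_coverNum_lt_exp hT hr (half_pos hη)), eventually_ge_atTop 1] with N hN hN1
    rw [hcard]
    refine hN.le.trans (Real.exp_le_exp.2 ?_)
    have : (1 : ℝ) ≤ N := by exact_mod_cast hN1
    push_cast
    nlinarith
  filter_upwards [hε.ae_eventually_forall_mem_norm_weightedBirkhoffSum_lt T
      (C := ‖f‖₊ + 1) (by positivity) (fun x => (f.norm_coe_le_norm x).trans (by simp))
      hsubexp (half_pos hδ),
    hε.ae_forall_abs_ite_le_one] with ω hgood hw
  filter_upwards [hgood] with N hN x
  set S := weightedBirkhoffSum T f fun n => if p n then ε n ω else 0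
  obtain ⟨y, hy, hxy⟩ := hcover (N + 1) x
  have hSxy : ‖S x N - S y N‖ ≤ N * (δ / 2) :=
    norm_weightedBirkhoffSum_sub_le T hw fun n hn =>
      (dist_eq_norm (f _) (f _) ▸ hfr (hxy n (by simp only [mem_Icc] at hn; omega))).le
  linarith [hN y hy, norm_le_norm_add_norm_sub' (S x N) (S y N)]

lemma ae_forall_tendsto_inv_mul_weightedBirkhoffSum
    (hε : IsRademacherFamily P fun n : {n // p n} => ε n) (hent : ZeroTopEntropy T)
    (hT : Continuous T) (f : C(X, ℂ)) :
    ∀ᵐ ω ∂P, ∀ x, Tendsto (fun N : ℕ => (N : ℂ)⁻¹ *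
      weightedBirkhoffSum T f (fun n => if p n then ε n ω else 0) x N) atTop (𝓝 0) := by
  filter_upwards [ae_all_iff.2 fun k : ℕ =>
    hε.ae_eventually_forall_norm_weightedBirkhoffSum_le hent hT f (δ := 1 / (k + 1))
      (by positivity)] with ω hω x
  exact tendsto_inv_mul_of_forall_eventually_norm_le fun k => (hω k).mono fun N hN => hN x

end ProbabilityTheory.IsRademacherFamily

/-- The random Möbius function is almost surely orthogonal to every topological dynamical
system with zero topological entropy, with an exceptional set independent of `x` and `f`. -/
theorem random_moebius_orthogonal_to_zero_entropy
    {Ω : Type*} [MeasurableSpace Ω] (ℙ : Measure Ω) [IsProbabilityMeasure ℙ]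
    (ε : ℕ → Ω → ℝ) (hmeas : ∀ n, Measurable (ε n))
    (hindep : ProbabilityTheory.iIndepFun
      (fun n : {n : ℕ // Squarefree n} => ε n) ℙ)
    (hdist : ∀ n : ℕ, Squarefree n →
      ℙ {ω | ε n ω = 1} = 1/2 ∧ ℙ {ω | ε n ω = -1} = 1/2)
    (μrand : ℕ → Ω → ℝ)
    (hμrand : ∀ n ω, μrand n ω = if Squarefree n then ε n ω else 0)
    {X : Type*} [MetricSpace X] [CompactSpace X]
    (T : X ≃ₜ X) (hent : ZeroTopEntropy (⇑T)) :
    ∃ Ω' : Set Ω, MeasurableSet Ω' ∧ ℙ Ω' = 1 ∧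
      ∀ ω ∈ Ω', ∀ x : X, ∀ f : X → ℂ, Continuous f →
        Filter.Tendsto
          (fun N : ℕ => (N : ℂ)⁻¹ *
            ∑ n ∈ Finset.Icc 1 N, f ((⇑T)^[n] x) * (μrand n ω : ℂ))
          Filter.atTop (nhds 0) := by
  obtain rfl : μrand = fun n ω => if Squarefree n then ε n ω else 0 :=
    funext fun n => funext (hμrand n)
  have hε : ProbabilityTheory.IsRademacherFamily ℙ fun n : {n : ℕ // Squarefree n} => ε n :=
    ⟨fun n => hmeas n, hindep, fun n => hdist n n.2⟩
  obtain ⟨D, hDc, hDd⟩ := TopologicalSpace.exists_countable_dense C(X, ℂ)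
  have hae := hε.ae_forall_abs_ite_le_one.and <| (ae_ball_iff hDc).2 fun g _ =>
    hε.ae_forall_tendsto_inv_mul_weightedBirkhoffSum hent T.continuous g
  obtain ⟨Ω', hΩ'ae, hΩ'meas, hΩ'⟩ := hae.exists_measurable_mem
  refine ⟨Ω', hΩ'meas, (prob_compl_eq_zero_iff hΩ'meas).1 hΩ'ae, fun ω hω x f hf => ?_⟩
  exact tendsto_inv_mul_weightedBirkhoffSum_of_dense T hDd (hΩ' ω hω).1 x
    (fun g hg => (hΩ' ω hω).2 g hg x) ⟨f, hf⟩
end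

section
/- Let f : ℝ → ℝ be a convex function equal everywhere to its Taylor series at 0 (f(x) = ∑_{n≥0} f^{(n)}(0) xⁿ/n! for all x ∈ ℝ), and suppose that for every n ∈ ℕ one has f^{(2n)}(0) = f^{(n)}(0) > 0. Let (Ω,ℱ,ℙ) be a probability space, 𝒢 ⊆ ℱ a sub-σ-algebra, and Y an integrable random variable with E[Y | 𝒢] = 0 almost surely and |Y| ≤ c almost surely for some constant c > 0. Then for every t > 0, E[ f(tY) | 𝒢 ] ≤ f( t²c²/2 ) almost surely. -/
open MeasureTheory

/-!
On `|y| ≤ c`, convexity puts `f (t * y)` below the chord through `±t c`, an affine function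
of `y`; since `E[Y | 𝒢] = 0`, its conditional expectation is the constant
`(f (t c) + f (-t c)) / 2`. This even part of `f` has Taylor coefficients
`f^{(2k)}(0) / (2k)! = f^{(k)}(0) / (2k)!`, while `f (x² / 2)` has `f^{(k)}(0) / (2^k k!)` in
front of the same power `x^{2k}`, and `2^k k! ≤ (2k)!`.
-/

theorem HasSum.even_part {𝕜 : Type*} [Field 𝕜] [TopologicalSpace 𝕜] [IsTopologicalRing 𝕜]
    [NeZero (2 : 𝕜)] {a : ℕ → 𝕜} {x s s' : 𝕜}
    (hs : HasSum (fun n => a n * x ^ n) s) (hs' : HasSum (fun n => a n * (-x) ^ n) s') :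
    HasSum (fun k => a (2 * k) * x ^ (2 * k)) ((s + s') / 2) := by
  have hsym : HasSum (fun n => (a n * x ^ n + a n * (-x) ^ n) / 2) ((s + s') / 2) :=
    (hs.add hs').div_const 2
  have hodd : ∀ n ∉ Set.range (2 * ·), (a n * x ^ n + a n * (-x) ^ n) / 2 = 0 := by
    intro n hn
    have hn : Odd n := Nat.not_even_iff_odd.1 fun ⟨j, hj⟩ => hn ⟨j, by dsimp only; omega⟩
    rw [hn.neg_pow]
    ring
  convert (Function.Injective.hasSum_iff (fun _ _ => by omega) hodd).2 hsym using 2 with k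
  simp only [Function.comp_apply, (even_two_mul k).neg_pow]
  field_simp
  ring

theorem even_part_le_of_hasSum_factorial {a : ℕ → ℝ} {g : ℝ → ℝ}
    (hg : ∀ x, HasSum (fun n => a n * x ^ n / n.factorial) (g x))
    (ha_two_mul : ∀ n, a (2 * n) = a n) (ha_nonneg : ∀ n, 0 ≤ a n) (x : ℝ) :
    (g x + g (-x)) / 2 ≤ g (x ^ 2 / 2) := by
  have hcoeff (y : ℝ) : HasSum (fun n => a n / n.factorial * y ^ n) (g y) := by
    simpa only [mul_div_right_comm] using hg y
  refine hasSum_le (fun k => ?_) ((hcoeff x).even_part (hcoeff (-x))) (hg (x ^ 2 / 2))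
  have hfac : (2 ^ k * k.factorial : ℝ) ≤ (2 * k).factorial := by
    exact_mod_cast Nat.two_pow_mul_factorial_le_factorial_two_mul k
  calc a (2 * k) / (2 * k).factorial * x ^ (2 * k)
      = a k * (x ^ 2) ^ k / (2 * k).factorial := by rw [ha_two_mul, pow_mul]; ring
    _ ≤ a k * (x ^ 2) ^ k / (2 ^ k * k.factorial) := by
      gcongr
      exact mul_nonneg (ha_nonneg k) (by positivity)
    _ = a k * (x ^ 2 / 2) ^ k / k.factorial := by rw [div_pow]; ring

theorem ConvexOn.le_chord_of_abs_le {f : ℝ → ℝ} {a y : ℝ}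
    (hf : ConvexOn ℝ (Set.Icc (-a) a) f) (ha : 0 < a) (hy : |y| ≤ a) :
    f y ≤ (f a + f (-a)) / 2 + (f a - f (-a)) / (2 * a) * y := by
  obtain ⟨hy₁, hy₂⟩ := abs_le.1 hy
  have hsum : (a - y) / (2 * a) + (a + y) / (2 * a) = 1 := by field_simp; ring
  have hchord := hf.2 (x := -a) (y := a) ⟨le_rfl, by linarith⟩ ⟨by linarith, le_rfl⟩
    (div_nonneg (by linarith) (by linarith)) (div_nonneg (by linarith) (by linarith)) hsum
  have hpoint : (a - y) / (2 * a) * -a + (a + y) / (2 * a) * a = y := by field_simp; ring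
  rw [smul_eq_mul, smul_eq_mul, smul_eq_mul, smul_eq_mul, hpoint] at hchord
  refine hchord.trans_eq ?_
  field_simp
  ring

theorem integrable_comp_of_ae_abs_le {Ω : Type*} {mΩ : MeasurableSpace Ω} {μ : Measure Ω}
    [IsFiniteMeasure μ] {g : ℝ → ℝ} (hg : Continuous g) {Y : Ω → ℝ}
    (hY : AEStronglyMeasurable Y μ) {c : ℝ} (hbdd : ∀ᵐ ω ∂μ, |Y ω| ≤ c) :
    Integrable (fun ω => g (Y ω)) μ := by
  obtain ⟨M, hM⟩ :=
    (isCompact_Icc (a := -c) (b := c)).exists_bound_of_continuousOn hg.continuousOn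
  refine .mono' (integrable_const M) (hg.comp_aestronglyMeasurable hY) ?_
  filter_upwards [hbdd] with ω hω using hM _ (abs_le.1 hω)

theorem condExp_const_add_const_mul_ae_eq {Ω : Type*} {m mΩ : MeasurableSpace Ω}
    {μ : Measure Ω} [IsFiniteMeasure μ] (hm : m ≤ mΩ) {Y : Ω → ℝ} (hY : Integrable Y μ)
    (hYm : μ[Y | m] =ᵐ[μ] 0) (A B : ℝ) :
    μ[fun ω => A + B * Y ω | m] =ᵐ[μ] fun _ => A := by
  change μ[(fun _ => A) + B • Y | m] =ᵐ[μ] _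
  filter_upwards [condExp_add (m := m) (integrable_const A) (hY.smul B),
    condExp_smul (m := m) B Y, hYm] with ω hadd hsmul hzero
  simp [hadd, hsmul, hzero, condExp_const hm]

/-- If `f` is convex, equals its Taylor series at `0`, and satisfies
`f^{(2n)}(0) = f^{(n)}(0) > 0` for all `n`, and `Y` is a bounded random variable with
`E[Y | 𝒢] = 0` a.s. and `|Y| ≤ c` a.s., then `E[f(tY) | 𝒢] ≤ f(t²c²/2)` a.s. for all `t > 0`. -/
theorem condexp_convex_taylor_bound
    (f : ℝ → ℝ) (hconv : ConvexOn ℝ Set.univ f)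
    (htaylor : ∀ x : ℝ,
      HasSum (fun n : ℕ => iteratedDeriv n f 0 * x ^ n / (n.factorial : ℝ)) (f x))
    (hderiv : ∀ n : ℕ, iteratedDeriv (2 * n) f 0 = iteratedDeriv n f 0 ∧
      0 < iteratedDeriv n f 0)
    {Ω : Type*} {mΩ : MeasurableSpace Ω} (ℙ : Measure Ω) [IsProbabilityMeasure ℙ]
    (m : MeasurableSpace Ω) (hm : m ≤ mΩ)
    (Y : Ω → ℝ) (hYint : Integrable Y ℙ)
    (hcond : ℙ[Y | m] =ᵐ[ℙ] 0)
    (c : ℝ) (hc : 0 < c) (hbdd : ∀ᵐ ω ∂ℙ, |Y ω| ≤ c) :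
    ∀ t : ℝ, 0 < t →
      ∀ᵐ ω ∂ℙ, (ℙ[fun ω' => f (t * Y ω') | m]) ω ≤ f (t ^ 2 * c ^ 2 / 2) := by
  intro t ht
  set A := (f (t * c) + f (-(t * c))) / 2
  set B := (f (t * c) - f (-(t * c))) / (2 * (t * c))
  have hchord : ∀ᵐ ω ∂ℙ, f (t * Y ω) ≤ A + B * t * Y ω := by
    filter_upwards [hbdd] with ω hω
    rw [mul_assoc]
    refine (hconv.subset (Set.subset_univ _) (convex_Icc _ _)).le_chord_of_abs_le
      (mul_pos ht hc) ?_
    rw [abs_mul, abs_of_pos ht]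
    exact mul_le_mul_of_nonneg_left hω ht.le
  have hfc : Continuous f := continuousOn_univ.1 (hconv.continuousOn isOpen_univ)
  have hint : Integrable (fun ω => f (t * Y ω)) ℙ :=
    integrable_comp_of_ae_abs_le (g := fun y => f (t * y)) (by fun_prop)
      hYint.aestronglyMeasurable hbdd
  have hmono := condExp_mono (m := m) hint ((integrable_const A).add (hYint.const_mul (B * t)))
    hchord
  have heven : A ≤ f (t ^ 2 * c ^ 2 / 2) := by
    simpa only [mul_pow] using even_part_le_of_hasSum_factorial htaylor
      (fun n => (hderiv n).1) (fun n => (hderiv n).2.le) (t * c)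
  filter_upwards [hmono, condExp_const_add_const_mul_ae_eq hm hYint hcond A (B * t)]
    with ω hmono_ω haffine_ω
  exact (hmono_ω.trans_eq haffine_ω).trans heven
end

section
/- (Coquet–Kamae–Mendès-France) Let (P_n) and (Q_n) be sequences of Borel probability measures on the circle ℝ/2πℤ converging weakly to the probability measures P and Q respectively. Then limsup_{n→∞} G(P_n, Q_n) ≤ G(P, Q), where G denotes the affinity. -/
/-!
Write `f, g` for the densities of `μ, ν` with respect to `μ + ν`. For every `u > 0`, AM-GM
gives `√(f g) ≤ (f u + g u⁻¹) / 2`, hence `G(μ, ν) ≤ (∫ u dμ + ∫ u⁻¹ dν) / 2`, with near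
equality for `u = √((g + δ) / (f + δ))` and small `δ > 0`. This `u` lies between two positive
constants, so it can be replaced by a continuous function close to it in `L¹(μ + ν)` at small
cost. Thus the affinity is an infimum of functionals `(∫ u dμ + ∫ u⁻¹ dν) / 2` with continuous
`u`, each of which is continuous under weak convergence, and an infimum of continuous functions
is upper semicontinuous.
-/

open MeasureTheory

/-- The affinity `G(μ,ν) = ∫ √((dμ/dλ)(dν/dλ)) dλ` with dominating measure `λ = μ + ν`. -/
noncomputable def affinity {α : Type*} [MeasurableSpace α] (μ ν : Measure α) : ℝ :=
  ∫ x, Real.sqrt ((μ.rnDeriv (μ + ν) x).toReal * (ν.rnDeriv (μ + ν) x).toReal) ∂(μ + ν)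

open Filter Set Topology

lemma abs_max_min_sub_le {a b v : ℝ} (w : ℝ) (hv : v ∈ Icc a b) :
    |max a (min b w) - v| ≤ |w - v| := by
  grind [abs_le, le_abs_self, neg_abs_le]

lemma abs_inv_sub_inv_le {a u v : ℝ} (ha : 0 < a) (hu : a ≤ u) (hv : a ≤ v) :
    |u⁻¹ - v⁻¹| ≤ (a ^ 2)⁻¹ * |u - v| := by
  have hu0 := ha.trans_le hu
  have hv0 := ha.trans_le hv
  rw [inv_sub_inv hu0.ne' hv0.ne', abs_div, abs_sub_comm, abs_of_pos (mul_pos hu0 hv0),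
    div_eq_inv_mul]
  gcongr
  nlinarith

lemma two_mul_sqrt_mul_le {f g u : ℝ} (hf : 0 ≤ f) (hg : 0 ≤ g) (hu : 0 < u) :
    2 * √(f * g) ≤ f * u + g * u⁻¹ := by
  have hfg : √(f * g) = √(f * u) * √(g * u⁻¹) := by
    rw [← Real.sqrt_mul (by positivity)]
    field_simp
  have := two_mul_le_add_sq (√(f * u)) (√(g * u⁻¹))
  rwa [Real.sq_sqrt (by positivity), Real.sq_sqrt (by positivity), mul_assoc, ← hfg] at this

lemma mul_sqrt_div_self {p : ℝ} (hp : 0 ≤ p) (q : ℝ) : p * √(q / p) = √(p * q) := by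
  rcases hp.eq_or_lt with rfl | hp
  · simp
  rw [← Real.sqrt_sq hp.le, ← Real.sqrt_mul (sq_nonneg _), Real.sqrt_sq hp.le]
  field_simp

lemma mul_sqrt_div_add_mul_inv_sqrt_div_le {f g δ : ℝ} (hf : 0 ≤ f) (hg : 0 ≤ g) (hδ : 0 < δ) :
    f * √((g + δ) / (f + δ)) + g * (√((g + δ) / (f + δ)))⁻¹ ≤ 2 * √((f + δ) * (g + δ)) := by
  set r := √((g + δ) / (f + δ))
  have hr : 0 ≤ r := Real.sqrt_nonneg _
  have h₁ : (f + δ) * r = √((f + δ) * (g + δ)) := mul_sqrt_div_self (by positivity) _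
  have h₂ : (g + δ) * r⁻¹ = √((f + δ) * (g + δ)) := by
    rw [← Real.sqrt_inv, inv_div, mul_sqrt_div_self (by positivity), mul_comm]
  nlinarith [inv_nonneg.2 hr]

lemma sqrt_add_mul_add_le {f g δ : ℝ} (hf : f ∈ Icc 0 1) (hg : g ∈ Icc 0 1) (hδ : 0 ≤ δ) :
    √((f + δ) * (g + δ)) ≤ √(f * g) + √(δ * (2 + δ)) := by
  obtain ⟨hf0, hf1⟩ := hf
  obtain ⟨hg0, hg1⟩ := hg
  rw [Real.sqrt_le_iff]
  refine ⟨by positivity, ?_⟩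
  nlinarith [Real.sq_sqrt (mul_nonneg hf0 hg0), Real.sq_sqrt (by positivity : 0 ≤ δ * (2 + δ)),
    mul_nonneg (Real.sqrt_nonneg (f * g)) (Real.sqrt_nonneg (δ * (2 + δ)))]

noncomputable def affinityFunctional {α : Type*} [MeasurableSpace α] (μ ν : Measure α)
    (u : α → ℝ) : ℝ :=
  (∫ x, u x ∂μ + ∫ x, (u x)⁻¹ ∂ν) / 2

section Measure

variable {α : Type*} [MeasurableSpace α] {u v : α → ℝ} {a b : ℝ}

lemma integrable_inv_of_ae_mem_Icc {ρ : Measure α} [IsFiniteMeasure ρ] (ha : 0 < a)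
    (hu : AEMeasurable u ρ) (hab : ∀ᵐ x ∂ρ, u x ∈ Icc a b) :
    Integrable (fun x => (u x)⁻¹) ρ :=
  Integrable.of_mem_Icc b⁻¹ a⁻¹ hu.inv <| hab.mono fun _ hx =>
    ⟨inv_anti₀ (ha.trans_le hx.1) hx.2, inv_anti₀ ha hx.1⟩

lemma toReal_rnDeriv_mem_Icc_of_le {μ ρ : Measure α} [SigmaFinite ρ] (h : μ ≤ ρ) :
    ∀ᵐ x ∂ρ, (μ.rnDeriv ρ x).toReal ∈ Icc 0 1 := by
  filter_upwards [Measure.rnDeriv_le_one_of_le h] with x hx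
  exact ⟨ENNReal.toReal_nonneg, ENNReal.toReal_le_of_le_ofReal zero_le_one (by simpa using hx)⟩

variable {μ ν : Measure α} [IsFiniteMeasure μ] [IsFiniteMeasure ν]

lemma integrable_rnDeriv_mul_add_rnDeriv_mul (hu : Integrable u μ) (hv : Integrable v ν) :
    Integrable (fun x => (μ.rnDeriv (μ + ν) x).toReal * u x
      + (ν.rnDeriv (μ + ν) x).toReal * v x) (μ + ν) := by
  have hμ : μ ≪ μ + ν := Measure.AbsolutelyContinuous.rfl.add_right ν
  have hν : ν ≪ μ + ν := Measure.AbsolutelyContinuous.rfl.add_right' μ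
  exact ((integrable_toReal_rnDeriv_mul_iff hμ).2 hu).add
    ((integrable_toReal_rnDeriv_mul_iff hν).2 hv)

lemma integral_add_integral_eq_integral_rnDeriv (hu : Integrable u μ) (hv : Integrable v ν) :
    ∫ x, u x ∂μ + ∫ x, v x ∂ν = ∫ x, ((μ.rnDeriv (μ + ν) x).toReal * u x
      + (ν.rnDeriv (μ + ν) x).toReal * v x) ∂(μ + ν) := by
  have hμ : μ ≪ μ + ν := Measure.AbsolutelyContinuous.rfl.add_right ν
  have hν : ν ≪ μ + ν := Measure.AbsolutelyContinuous.rfl.add_right' μ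
  rw [integral_add ((integrable_toReal_rnDeriv_mul_iff hμ).2 hu)
    ((integrable_toReal_rnDeriv_mul_iff hν).2 hv), integral_toReal_rnDeriv_mul hμ,
    integral_toReal_rnDeriv_mul hν]

lemma affinity_le_affinityFunctional (ha : 0 < a) (hu : AEMeasurable u (μ + ν))
    (hab : ∀ᵐ x ∂(μ + ν), u x ∈ Icc a b) :
    affinity μ ν ≤ affinityFunctional μ ν u := by
  have hu_int := (integrable_add_measure.1 (Integrable.of_mem_Icc a b hu hab)).1
  have hu_inv_int := (integrable_add_measure.1 (integrable_inv_of_ae_mem_Icc ha hu hab)).2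
  rw [affinityFunctional, integral_add_integral_eq_integral_rnDeriv hu_int hu_inv_int,
    ← integral_div]
  refine integral_mono_of_nonneg (ae_of_all _ fun _ => Real.sqrt_nonneg _)
    ((integrable_rnDeriv_mul_add_rnDeriv_mul hu_int hu_inv_int).div_const 2) ?_
  filter_upwards [hab] with x hx
  have := two_mul_sqrt_mul_le (f := (μ.rnDeriv (μ + ν) x).toReal)
    (g := (ν.rnDeriv (μ + ν) x).toReal) ENNReal.toReal_nonneg ENNReal.toReal_nonneg
    (ha.trans_le hx.1)
  linarith

lemma exists_affinityFunctional_le_affinity_add {δ : ℝ} (hδ : 0 < δ) :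
    ∃ u : α → ℝ, Measurable u ∧ ∃ a b, 0 < a ∧ a ≤ b ∧ (∀ᵐ x ∂(μ + ν), u x ∈ Icc a b) ∧
      affinityFunctional μ ν u ≤ affinity μ ν + √(δ * (2 + δ)) * (μ + ν).real univ := by
  set f := fun x => (μ.rnDeriv (μ + ν) x).toReal
  set g := fun x => (ν.rnDeriv (μ + ν) x).toReal
  have hf : ∀ᵐ x ∂(μ + ν), f x ∈ Icc 0 1 :=
    toReal_rnDeriv_mem_Icc_of_le (Measure.le_add_right le_rfl)
  have hg : ∀ᵐ x ∂(μ + ν), g x ∈ Icc 0 1 :=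
    toReal_rnDeriv_mem_Icc_of_le (Measure.le_add_left le_rfl)
  set u := fun x => √((g x + δ) / (f x + δ))
  have hu : Measurable u := by fun_prop
  set a := √(δ / (1 + δ))
  have ha : 0 < a := by positivity
  have ha_inv : a⁻¹ = √((1 + δ) / δ) := by rw [← Real.sqrt_inv, inv_div]
  have ha_le : a ≤ a⁻¹ := by
    have : a ≤ 1 := Real.sqrt_le_one.2 ((div_le_one (by positivity)).2 (by linarith))
    exact this.trans (one_le_inv₀ ha |>.2 this)
  have hab : ∀ᵐ x ∂(μ + ν), u x ∈ Icc a a⁻¹ := by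
    filter_upwards [hf, hg] with x ⟨hf0, hf1⟩ ⟨hg0, hg1⟩
    rw [ha_inv]
    exact ⟨Real.sqrt_le_sqrt (div_le_div₀ (by positivity) (by linarith) (by positivity)
      (by linarith)), Real.sqrt_le_sqrt (div_le_div₀ (by positivity) (by linarith) hδ
      (by linarith))⟩
  refine ⟨u, hu, a, a⁻¹, ha, ha_le, hab, ?_⟩
  have hu_int := (integrable_add_measure.1 (Integrable.of_mem_Icc _ _ hu.aemeasurable hab)).1
  have hu_inv_int :=
    (integrable_add_measure.1 (integrable_inv_of_ae_mem_Icc ha hu.aemeasurable hab)).2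
  have hsqrt_int : Integrable (fun x => √(f x * g x)) (μ + ν) :=
    Integrable.of_mem_Icc 0 1 (by fun_prop) <| by
      filter_upwards [hf, hg] with x ⟨hf0, hf1⟩ ⟨hg0, hg1⟩
      exact ⟨Real.sqrt_nonneg _, Real.sqrt_le_one.2 (mul_le_one₀ hf1 hg0 hg1)⟩
  calc affinityFunctional μ ν u = ∫ x, (f x * u x + g x * (u x)⁻¹) / 2 ∂(μ + ν) := by
        rw [affinityFunctional, integral_add_integral_eq_integral_rnDeriv hu_int hu_inv_int,
          integral_div]
    _ ≤ ∫ x, (√(f x * g x) + √(δ * (2 + δ))) ∂(μ + ν) := by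
        refine integral_mono_of_nonneg ?_ (hsqrt_int.add (integrable_const _)) ?_
        · exact ae_of_all _ fun x => by positivity
        · filter_upwards [hf, hg] with x hfx hgx
          have := mul_sqrt_div_add_mul_inv_sqrt_div_le hfx.1 hgx.1 hδ
          have := sqrt_add_mul_add_le hfx hgx hδ.le
          linarith
    _ = affinity μ ν + √(δ * (2 + δ)) * (μ + ν).real univ := by
        rw [integral_add hsqrt_int (integrable_const _), integral_const, smul_eq_mul, mul_comm]
        rfl

lemma affinityFunctional_le_add_integral_abs_sub (ha : 0 < a) (hu : AEMeasurable u (μ + ν))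
    (hv : AEMeasurable v (μ + ν)) (hua : ∀ᵐ x ∂(μ + ν), u x ∈ Icc a b)
    (hva : ∀ᵐ x ∂(μ + ν), v x ∈ Icc a b) :
    affinityFunctional μ ν u
      ≤ affinityFunctional μ ν v + (1 + (a ^ 2)⁻¹) / 2 * ∫ x, |u x - v x| ∂(μ + ν) := by
  set K := 1 + (a ^ 2)⁻¹
  have hu_int := integrable_add_measure.1 (Integrable.of_mem_Icc a b hu hua)
  have hv_int := integrable_add_measure.1 (Integrable.of_mem_Icc a b hv hva)
  have hu_inv_int := integrable_add_measure.1 (integrable_inv_of_ae_mem_Icc ha hu hua)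
  have hv_inv_int := integrable_add_measure.1 (integrable_inv_of_ae_mem_Icc ha hv hva)
  have hdiff_int : Integrable (fun x => |u x - v x|) μ ∧ Integrable (fun x => |u x - v x|) ν :=
    integrable_add_measure.1
      ((Integrable.of_mem_Icc a b hu hua).sub (Integrable.of_mem_Icc a b hv hva)).abs
  have hμ : ∫ x, u x ∂μ - ∫ x, v x ∂μ ≤ K * ∫ x, |u x - v x| ∂μ := by
    rw [← integral_sub hu_int.1 hv_int.1, ← integral_const_mul]
    refine integral_mono_ae (hu_int.1.sub hv_int.1) (hdiff_int.1.const_mul K) ?_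
    filter_upwards with x
    have : 0 ≤ (a ^ 2)⁻¹ * |u x - v x| := by positivity
    nlinarith [le_abs_self (u x - v x)]
  have hν : ∫ x, (u x)⁻¹ ∂ν - ∫ x, (v x)⁻¹ ∂ν ≤ K * ∫ x, |u x - v x| ∂ν := by
    rw [← integral_sub hu_inv_int.2 hv_inv_int.2, ← integral_const_mul]
    refine integral_mono_ae (hu_inv_int.2.sub hv_inv_int.2) (hdiff_int.2.const_mul K) ?_
    filter_upwards [(ae_add_measure_iff.1 hua).2, (ae_add_measure_iff.1 hva).2] with x hux hvx
    have := abs_inv_sub_inv_le ha hux.1 hvx.1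
    nlinarith [le_abs_self ((u x)⁻¹ - (v x)⁻¹), abs_nonneg (u x - v x)]
  rw [integral_add_measure hdiff_int.1 hdiff_int.2]
  simp only [affinityFunctional]
  linarith

lemma exists_continuous_mem_Icc_integral_abs_sub_le [TopologicalSpace α] [NormalSpace α]
    [BorelSpace α] {ρ : Measure α} [IsFiniteMeasure ρ] [ρ.WeaklyRegular]
    (hv : AEMeasurable v ρ) (hab : a ≤ b) (hva : ∀ᵐ x ∂ρ, v x ∈ Icc a b) {η : ℝ} (hη : 0 < η) :
    ∃ u : C(α, ℝ), (∀ x, u x ∈ Icc a b) ∧ ∫ x, |u x - v x| ∂ρ ≤ η := by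
  have hv_int := Integrable.of_mem_Icc a b hv hva
  obtain ⟨w, hw, hw_int⟩ := hv_int.exists_boundedContinuous_integral_sub_le hη
  refine ⟨⟨fun x => max a (min b (w x)), by fun_prop⟩,
    fun x => ⟨le_max_left _ _, max_le hab (min_le_left _ _)⟩, le_trans ?_ hw⟩
  refine integral_mono_of_nonneg (ae_of_all _ fun _ => abs_nonneg _) (hv_int.sub hw_int).norm ?_
  filter_upwards [hva] with x hx
  simpa [Real.norm_eq_abs, abs_sub_comm] using abs_max_min_sub_le (w x) hx

lemma exists_continuous_affinityFunctional_le [TopologicalSpace α] [NormalSpace α]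
    [BorelSpace α] [(μ + ν).WeaklyRegular] {ε : ℝ} (hε : 0 < ε) :
    ∃ u : C(α, ℝ), ∃ a b, 0 < a ∧ (∀ x, u x ∈ Icc a b) ∧
      affinityFunctional μ ν u ≤ affinity μ ν + ε := by
  have hsmall : Tendsto (fun δ => √(δ * (2 + δ)) * (μ + ν).real univ) (𝓝[>] 0) (𝓝 0) := by
    refine (Continuous.tendsto' ?_ 0 0 (by simp)).mono_left nhdsWithin_le_nhds
    fun_prop
  obtain ⟨δ, hδε, hδ⟩ := ((hsmall.eventually (gt_mem_nhds (half_pos hε))).and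
    self_mem_nhdsWithin).exists
  obtain ⟨v, hv, a, b, ha, hab, hva, hv_le⟩ :=
    exists_affinityFunctional_le_affinity_add (μ := μ) (ν := ν) hδ
  set K := 1 + (a ^ 2)⁻¹
  have hK : K ≠ 0 := by positivity
  obtain ⟨u, hua, hu_close⟩ := exists_continuous_mem_Icc_integral_abs_sub_le hv.aemeasurable hab
    hva (η := ε / K) (by positivity)
  refine ⟨u, a, b, ha, hua, ?_⟩
  have hu_le := affinityFunctional_le_add_integral_abs_sub ha u.continuous.aemeasurable
    hv.aemeasurable (ae_of_all _ hua) hva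
  have hclose : K / 2 * ∫ x, |u x - v x| ∂(μ + ν) ≤ ε / 2 := by
    calc K / 2 * ∫ x, |u x - v x| ∂(μ + ν) ≤ K / 2 * (ε / K) := by gcongr
      _ = ε / 2 := by field_simp
  linarith

end Measure

/-- Coquet–Kamae–Mendès-France: affinity is upper semicontinuous along weakly convergent
sequences of probability measures on the circle. -/
theorem affinity_limsup_le_of_weak_convergence
    (P Q : ℕ → Measure (AddCircle (2 * Real.pi)))
    (hP : ∀ n, IsProbabilityMeasure (P n)) (hQ : ∀ n, IsProbabilityMeasure (Q n))
    (Plim Qlim : Measure (AddCircle (2 * Real.pi)))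
    (hPlim : IsProbabilityMeasure Plim) (hQlim : IsProbabilityMeasure Qlim)
    (hPconv : ∀ w : C(AddCircle (2 * Real.pi), ℝ),
      Filter.Tendsto (fun n => ∫ θ, w θ ∂(P n)) Filter.atTop (nhds (∫ θ, w θ ∂Plim)))
    (hQconv : ∀ w : C(AddCircle (2 * Real.pi), ℝ),
      Filter.Tendsto (fun n => ∫ θ, w θ ∂(Q n)) Filter.atTop (nhds (∫ θ, w θ ∂Qlim))) :
    Filter.limsup (fun n => affinity (P n) (Q n)) Filter.atTop ≤ affinity Plim Qlim := by
  refine le_of_forall_pos_le_add fun ε hε => ?_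
  obtain ⟨u, a, b, ha, hu, hu_le⟩ := exists_continuous_affinityFunctional_le (μ := Plim)
    (ν := Qlim) hε
  have hu_inv : Continuous fun x => (u x)⁻¹ :=
    u.continuous.inv₀ fun x => (ha.trans_le (hu x).1).ne'
  have hlim : Tendsto (fun n => affinityFunctional (P n) (Q n) u) atTop
      (𝓝 (affinityFunctional Plim Qlim u)) :=
    ((hPconv u).add (hQconv ⟨_, hu_inv⟩)).div_const 2
  have hbound : ∀ n, affinity (P n) (Q n) ≤ affinityFunctional (P n) (Q n) u := fun n =>
    have := hP n
    have := hQ n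
    affinity_le_affinityFunctional ha u.continuous.aemeasurable (ae_of_all _ hu)
  calc limsup (fun n => affinity (P n) (Q n)) atTop
      ≤ limsup (fun n => affinityFunctional (P n) (Q n) u) atTop :=
        limsup_le_limsup (.of_forall hbound)
          (isCoboundedUnder_le_of_le atTop fun _ => integral_nonneg fun _ => Real.sqrt_nonneg _)
          hlim.isBoundedUnder_le
    _ = affinityFunctional Plim Qlim u := hlim.limsup_eq
    _ ≤ affinity Plim Qlim + ε := hu_le
end

section
/- For n ≥ 1 let P_n(θ) = (1/√n) ∑_{j=1}^{n} μ(j) e^{ijθ} and ‖P_n‖₂² = ∫₀^{2π} |P_n(θ)|² dθ/(2π) = (1/n) ∑_{j=1}^{n} μ(j)². Assume the sequence (P_n) is L¹-flat in the normalized sense that ∫₀^{2π} | |P_n(θ)|² / ‖P_n‖₂² − 1 | dθ/(2π) → 0 as n → ∞. Then for every integer k ≠ 0, lim_{n→∞} (1/n) ∑_{j=1}^{n} μ(j) μ(j+k) = 0. -/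
/-! For `k ≠ 0` the `k`-th Fourier coefficient of `|P_n|²` is the truncated correlation
`(1/n) ∑_{j + k ≤ n} μ(j) μ(j+k)`. Constants have no nonzero Fourier modes, so this coefficient
is bounded by `‖|P_n|² - ‖P_n‖₂²‖₁ = ‖P_n‖₂² ∫ ||P_n|² / ‖P_n‖₂² - 1| ≤ ∫ ||P_n|² / ‖P_n‖₂² - 1|`,
which tends to `0` by flatness. Dropping the truncation costs at most `k / n`. -/

open scoped BigOperators
open MeasureTheory AddCircle ArithmeticFunction

instance : Fact (0 < 2 * Real.pi) := ⟨by positivity⟩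

section FourierCoeff

variable {T : ℝ} [Fact (0 < T)] {E : Type*} [NormedAddCommGroup E] [NormedSpace ℂ E]

theorem norm_fourierCoeff_le_integral_norm (f : AddCircle T → E) (n : ℤ) :
    ‖fourierCoeff f n‖ ≤ ∫ t, ‖f t‖ ∂haarAddCircle := by
  refine (norm_integral_le_integral_norm _).trans_eq (integral_congr_ae (ae_of_all _ fun t => ?_))
  dsimp only
  rw [norm_smul, fourier_apply, Circle.norm_coe, one_mul]

theorem fourierCoeff_const (a : E) {n : ℤ} (hn : n ≠ 0) :
    fourierCoeff (fun _ : AddCircle T => a) n = 0 :=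
  integral_eq_zero_of_add_right_eq_neg fun t => by
    rw [fourier_add_half_inv_index (neg_ne_zero.2 hn) Fact.out, neg_smul]

theorem fourierCoeff_sub_const {f : AddCircle T → E} (hf : Integrable f haarAddCircle) (a : E)
    {n : ℤ} (hn : n ≠ 0) :
    fourierCoeff (fun t => f t - a) n = fourierCoeff f n := by
  have hsplit : (fun t => f t - a) = f + fun _ => -a := by
    ext t; simp [sub_eq_add_neg]
  rw [hsplit, fourierCoeff.add hf (integrable_const _), Pi.add_apply, fourierCoeff_const _ hn,
    add_zero]

theorem norm_fourierCoeff_le_integral_norm_sub_const {f : AddCircle T → E}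
    (hf : Integrable f haarAddCircle) (a : E) {n : ℤ} (hn : n ≠ 0) :
    ‖fourierCoeff f n‖ ≤ ∫ t, ‖f t - a‖ ∂haarAddCircle :=
  fourierCoeff_sub_const hf a hn ▸ norm_fourierCoeff_le_integral_norm _ n

theorem fourierCoeff_norm_sum_sq {ι : Type*} (s : Finset ι) (e : ι → ℤ) (c : ι → ℂ) (k : ℤ) :
    fourierCoeff (fun x : AddCircle T => ((‖∑ i ∈ s, c i * fourier (e i) x‖ ^ 2 : ℝ) : ℂ)) k
      = ∑ i ∈ s, ∑ i' ∈ s, if k = e i - e i' then c i * (starRingEnd ℂ) (c i') else 0 := by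
  have hexpand : (fun x : AddCircle T => ((‖∑ i ∈ s, c i * fourier (e i) x‖ ^ 2 : ℝ) : ℂ))
      = ∑ i ∈ s, ∑ i' ∈ s, fun x =>
          (c i * (starRingEnd ℂ) (c i')) * fourier (e i - e i') x := by
    ext x
    rw [Complex.ofReal_pow, ← Complex.mul_conj', map_sum, Finset.sum_mul_sum, Finset.sum_apply]
    refine Finset.sum_congr rfl fun i _ => ?_
    rw [Finset.sum_apply]
    refine Finset.sum_congr rfl fun i' _ => ?_
    rw [map_mul, ← fourier_neg, sub_eq_add_neg, fourier_add]
    ring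
  have hint : ∀ m : ℤ, ∀ a : ℂ,
      Integrable (fun x : AddCircle T => a * fourier m x) haarAddCircle := fun m a =>
    ((fourier m).continuous.integrable_of_hasCompactSupport
      (HasCompactSupport.of_compactSpace _)).const_mul a
  rw [hexpand, fourierCoeff.sum _ _ fun i _ => integrable_finsetSum' _ fun i' _ => hint _ _,
    Finset.sum_apply]
  refine Finset.sum_congr rfl fun i _ => ?_
  rw [fourierCoeff.sum _ _ fun i' _ => hint _ _, Finset.sum_apply]
  refine Finset.sum_congr rfl fun i' _ => ?_
  rw [fourierCoeff.const_mul, fourierCoeff_fourier, Pi.single_apply, mul_ite, mul_one, mul_zero]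

end FourierCoeff

noncomputable def moebiusPoly (n : ℕ) (θ : AddCircle (2 * Real.pi)) : ℂ :=
  (Real.sqrt n : ℂ)⁻¹ * ∑ j ∈ Finset.Icc 1 n, (moebius j : ℂ) * fourier (j : ℤ) θ

-- `‖moebiusPoly n‖₂²`, by Parseval.
noncomputable def moebiusMeanSquare (n : ℕ) : ℝ :=
  (n : ℝ)⁻¹ * ∑ j ∈ Finset.Icc 1 n, (moebius j : ℝ) ^ 2

theorem moebiusMeanSquare_pos {n : ℕ} (hn : n ≠ 0) : 0 < moebiusMeanSquare n := by
  have hone : ((moebius 1 : ℤ) : ℝ) ^ 2 ≤ ∑ j ∈ Finset.Icc 1 n, (moebius j : ℝ) ^ 2 :=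
    Finset.single_le_sum (f := fun j => ((moebius j : ℤ) : ℝ) ^ 2) (fun j _ => sq_nonneg _)
      (Finset.mem_Icc.2 ⟨le_rfl, Nat.one_le_iff_ne_zero.2 hn⟩)
  rw [moebius_apply_one, Int.cast_one, one_pow] at hone
  exact mul_pos (by positivity) (one_pos.trans_le hone)

theorem moebiusMeanSquare_le_one (n : ℕ) : moebiusMeanSquare n ≤ 1 := by
  have hsum : ∑ j ∈ Finset.Icc 1 n, (moebius j : ℝ) ^ 2 ≤ n := by
    calc ∑ j ∈ Finset.Icc 1 n, (moebius j : ℝ) ^ 2 ≤ ∑ _j ∈ Finset.Icc 1 n, (1 : ℝ) :=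
          Finset.sum_le_sum fun j _ => by
            rw [sq_le_one_iff_abs_le_one]; exact_mod_cast abs_moebius_le_one
      _ = n := by simp
  rcases Nat.eq_zero_or_pos n with rfl | hn
  · simp [moebiusMeanSquare]
  · exact (inv_mul_le_one₀ (by positivity)).2 hsum

theorem continuous_moebiusPoly (n : ℕ) : Continuous (moebiusPoly n) := by
  unfold moebiusPoly; fun_prop

theorem norm_moebiusPoly_sq (n : ℕ) (θ : AddCircle (2 * Real.pi)) :
    ‖moebiusPoly n θ‖ ^ 2 =
      (n : ℝ)⁻¹ * ‖∑ j ∈ Finset.Icc 1 n, (moebius j : ℂ) * fourier (j : ℤ) θ‖ ^ 2 := by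
  rw [moebiusPoly, norm_mul, mul_pow, norm_inv, Complex.norm_real, Real.norm_of_nonneg
    (Real.sqrt_nonneg _), inv_pow, Real.sq_sqrt (Nat.cast_nonneg n)]

theorem sum_Icc_ite_natCast_eq {M : Type*} [AddCommMonoid M] {f : ℕ → M} (hf : f 0 = 0)
    (n : ℕ) (m : ℤ) :
    ∑ i ∈ Finset.Icc 1 n, (if (i : ℤ) = m then f i else 0) = if m ≤ n then f m.toNat else 0 := by
  rcases le_or_gt m 0 with hm | hm
  · rw [Int.toNat_of_nonpos hm, hf, ite_self]
    exact Finset.sum_eq_zero fun i hi => if_neg (by simp only [Finset.mem_Icc] at hi; omega)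
  · have hcast : ∀ i : ℕ, (i : ℤ) = m ↔ m.toNat = i := fun i => by omega
    simp only [hcast, Finset.sum_ite_eq, Finset.mem_Icc]
    exact if_congr (by omega) rfl rfl

theorem fourierCoeff_norm_moebiusPoly_sq (n : ℕ) (k : ℤ) :
    fourierCoeff (fun θ => ((‖moebiusPoly n θ‖ ^ 2 : ℝ) : ℂ)) k =
      (((n : ℝ)⁻¹ * ∑ j ∈ Finset.Icc 1 n, (moebius j : ℝ) *
        (if (j : ℤ) + k ≤ n then (moebius ((j : ℤ) + k).toNat : ℝ) else 0) : ℝ) : ℂ) := by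
  simp_rw [norm_moebiusPoly_sq, Complex.ofReal_mul]
  rw [fourierCoeff.const_mul, fourierCoeff_norm_sum_sq, Finset.sum_comm]
  push_cast
  congr 1
  refine Finset.sum_congr rfl fun j _ => ?_
  have hshift : ∀ i : ℕ, (k = (i : ℤ) - j) ↔ ((i : ℤ) = j + k) := fun i => by omega
  simp only [hshift, map_intCast]
  rw [sum_Icc_ite_natCast_eq (f := fun i => (moebius i : ℂ) * moebius j) (by simp)]
  split_ifs <;> push_cast <;> ring

theorem card_filter_lt_add_le (n : ℕ) (k : ℤ) :
    ((Finset.Icc 1 n).filter fun j : ℕ => (n : ℤ) < j + k).card ≤ k.toNat := by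
  calc ((Finset.Icc 1 n).filter fun j : ℕ => (n : ℤ) < j + k).card
      ≤ (Finset.Ioc (n - k.toNat) n).card :=
        Finset.card_le_card fun j hj => by
          simp only [Finset.mem_filter, Finset.mem_Icc, Finset.mem_Ioc] at hj ⊢
          omega
    _ ≤ k.toNat := by rw [Nat.card_Ioc]; omega

theorem abs_sum_moebius_mul_shift_sub_le (n : ℕ) (k : ℤ) :
    |∑ j ∈ Finset.Icc 1 n, (moebius j : ℝ) * (moebius ((j : ℤ) + k).toNat : ℝ) -
      ∑ j ∈ Finset.Icc 1 n, (moebius j : ℝ) *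
        (if (j : ℤ) + k ≤ n then (moebius ((j : ℤ) + k).toNat : ℝ) else 0)| ≤ k.toNat := by
  have hdiff : ∀ j ∈ Finset.Icc 1 n,
      (moebius j : ℝ) * (moebius ((j : ℤ) + k).toNat : ℝ) -
        (moebius j : ℝ) * (if (j : ℤ) + k ≤ n then (moebius ((j : ℤ) + k).toNat : ℝ) else 0)
      = if (n : ℤ) < j + k then (moebius j : ℝ) * (moebius ((j : ℤ) + k).toNat : ℝ) else 0 :=
    fun j _ => by split_ifs <;> first | omega | ring
  rw [← Finset.sum_sub_distrib, Finset.sum_congr rfl hdiff, ← Finset.sum_filter]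
  calc _ ≤ ∑ j ∈ (Finset.Icc 1 n).filter (fun j : ℕ => (n : ℤ) < j + k),
          |(moebius j : ℝ) * (moebius ((j : ℤ) + k).toNat : ℝ)| := Finset.abs_sum_le_sum_abs _ _
    _ ≤ ∑ _j ∈ (Finset.Icc 1 n).filter (fun j : ℕ => (n : ℤ) < j + k), (1 : ℝ) :=
        Finset.sum_le_sum fun j _ => by
          rw [abs_mul]
          exact mul_le_one₀ (by exact_mod_cast abs_moebius_le_one) (abs_nonneg _)
            (by exact_mod_cast abs_moebius_le_one)
    _ ≤ k.toNat := by
        rw [Finset.sum_const, nsmul_one]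
        exact_mod_cast card_filter_lt_add_le n k

theorem norm_fourierCoeff_norm_moebiusPoly_sq_le {n : ℕ} (hn : n ≠ 0) {k : ℤ} (hk : k ≠ 0) :
    ‖fourierCoeff (fun θ => ((‖moebiusPoly n θ‖ ^ 2 : ℝ) : ℂ)) k‖ ≤
      ∫ θ, |‖moebiusPoly n θ‖ ^ 2 / moebiusMeanSquare n - 1| ∂haarAddCircle := by
  set Q := moebiusMeanSquare n
  have hQ : 0 < Q := moebiusMeanSquare_pos hn
  have hcont : Continuous fun θ => ((‖moebiusPoly n θ‖ ^ 2 : ℝ) : ℂ) :=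
    Complex.continuous_ofReal.comp ((continuous_moebiusPoly n).norm.pow 2)
  have hint : Integrable (fun θ => ((‖moebiusPoly n θ‖ ^ 2 : ℝ) : ℂ)) haarAddCircle :=
    hcont.integrable_of_hasCompactSupport (HasCompactSupport.of_compactSpace _)
  calc _ ≤ ∫ θ, ‖((‖moebiusPoly n θ‖ ^ 2 : ℝ) : ℂ) - Q‖ ∂haarAddCircle :=
        norm_fourierCoeff_le_integral_norm_sub_const hint _ hk
    _ = ∫ θ, Q * |‖moebiusPoly n θ‖ ^ 2 / Q - 1| ∂haarAddCircle := by
        refine integral_congr_ae (ae_of_all _ fun θ => ?_)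
        dsimp only
        have hfactor : ‖moebiusPoly n θ‖ ^ 2 - Q = Q * (‖moebiusPoly n θ‖ ^ 2 / Q - 1) := by
          field_simp
        rw [← Complex.ofReal_sub, Complex.norm_real, Real.norm_eq_abs, hfactor, abs_mul,
          abs_of_pos hQ]
    _ = Q * ∫ θ, |‖moebiusPoly n θ‖ ^ 2 / Q - 1| ∂haarAddCircle := integral_const_mul _ _
    _ ≤ _ := mul_le_of_le_one_left (integral_nonneg fun _ => abs_nonneg _)
        (moebiusMeanSquare_le_one n)

theorem abs_moebius_correlation_le {n : ℕ} (hn : n ≠ 0) {k : ℤ} (hk : k ≠ 0) :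
    |(n : ℝ)⁻¹ * ∑ j ∈ Finset.Icc 1 n, (moebius j : ℝ) * (moebius ((j : ℤ) + k).toNat : ℝ)| ≤
      ∫ θ, |‖moebiusPoly n θ‖ ^ 2 / moebiusMeanSquare n - 1| ∂haarAddCircle +
        k.toNat * (n : ℝ)⁻¹ := by
  have hcoeff := norm_fourierCoeff_norm_moebiusPoly_sq_le hn hk
  rw [fourierCoeff_norm_moebiusPoly_sq, Complex.norm_real, Real.norm_eq_abs] at hcoeff
  have hboundary := abs_sum_moebius_mul_shift_sub_le n k
  set C := ∑ j ∈ Finset.Icc 1 n, (moebius j : ℝ) * (moebius ((j : ℤ) + k).toNat : ℝ)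
  set C' := ∑ j ∈ Finset.Icc 1 n, (moebius j : ℝ) *
    (if (j : ℤ) + k ≤ n then (moebius ((j : ℤ) + k).toNat : ℝ) else 0)
  calc |(n : ℝ)⁻¹ * C| = |(n : ℝ)⁻¹ * C' + (n : ℝ)⁻¹ * (C - C')| := by ring_nf
    _ ≤ |(n : ℝ)⁻¹ * C'| + |(n : ℝ)⁻¹ * (C - C')| := abs_add_le _ _
    _ = |(n : ℝ)⁻¹ * C'| + (n : ℝ)⁻¹ * |C - C'| := by
        rw [abs_mul _ (C - C'), abs_inv, Nat.abs_cast]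
    _ ≤ _ := add_le_add hcoeff (by
        rw [mul_comm]; exact mul_le_mul_of_nonneg_right hboundary (by positivity))

/-- If the normalized polynomials with Möbius coefficients
`P_n(θ) = (1/√n) ∑_{j=1}^n μ(j) e^{ijθ}` are `L¹`-flat, then the self-correlations of the
Möbius function vanish: `(1/n) ∑_{j=1}^n μ(j) μ(j+k) → 0` for every integer `k ≠ 0`
(where `μ` is extended by `0` to non-positive integers). -/
theorem moebius_correlations_of_L1_flat
    (hflat : Filter.Tendsto
      (fun n : ℕ =>
        ∫ θ, |(‖(Real.sqrt n : ℂ)⁻¹ *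
              ∑ j ∈ Finset.Icc 1 n, (moebius j : ℂ) * fourier (j : ℤ) θ‖) ^ 2 /
            ((n : ℝ)⁻¹ * ∑ j ∈ Finset.Icc 1 n, (moebius j : ℝ) ^ 2) - 1|
          ∂(haarAddCircle : Measure (AddCircle (2 * Real.pi))))
      Filter.atTop (nhds 0)) :
    ∀ k : ℤ, k ≠ 0 →
      Filter.Tendsto
        (fun n : ℕ => (n : ℝ)⁻¹ *
          ∑ j ∈ Finset.Icc 1 n, (moebius j : ℝ) * (moebius ((j : ℤ) + k).toNat : ℝ))
        Filter.atTop (nhds 0) := by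
  intro k hk
  have hboundary : Filter.Tendsto (fun n : ℕ => k.toNat * (n : ℝ)⁻¹) Filter.atTop (nhds 0) := by
    simpa using tendsto_inv_atTop_nhds_zero_nat.const_mul (k.toNat : ℝ)
  refine squeeze_zero_norm' ?_ (by simpa only [add_zero] using hflat.add hboundary)
  filter_upwards [Filter.eventually_ne_atTop 0] with n hn
  exact (Real.norm_eq_abs _).trans_le (abs_moebius_correlation_le hn hk)
end

section
/- Let X be a compact metric space and let ξ, σ, λ be finite positive Borel measures on X such that for every nonnegative continuous function w : X → ℝ, ∫ w dξ ≤ (∫ w dσ)^{1/2} · (∫ w dλ)^{1/2}. Then for every Borel set A ⊆ X, ξ(A) ≤ √(σ(A)) · √(λ(A)). -/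
/-!
By inner regularity of `ξ` (by closed sets) and outer regularity of `σ` and `λ`, it suffices to
bound `ξ K` for closed `K` by `√(σ U) √(λ U)` for open `U ⊇ K`. A Urysohn function `f` with
`𝟙_K ≤ f ≤ 𝟙_U` is an admissible test function, and
`ξ K ≤ ∫ f dξ ≤ √(∫ f dσ) √(∫ f dλ) ≤ √(σ U) √(λ U)`.
-/

open MeasureTheory Set Filter Topology
open scoped ENNReal

theorem exists_continuous_indicator_le_le_indicator {X : Type*} [TopologicalSpace X]
    [NormalSpace X] {K U : Set X} (hK : IsClosed K) (hU : IsOpen U) (hKU : K ⊆ U) :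
    ∃ f : C(X, ℝ), K.indicator 1 ≤ ⇑f ∧ ⇑f ≤ U.indicator 1 := by
  obtain ⟨f, hf₀, hf₁, hf⟩ := exists_continuous_zero_one_of_isClosed hU.isClosed_compl hK
    (disjoint_compl_left_iff_subset.mpr hKU)
  refine ⟨f, fun x => ?_, fun x => ?_⟩
  · by_cases hx : x ∈ K
    · simp [hx, hf₁ hx]
    · simp [hx, (hf x).1]
  · by_cases hx : x ∈ U
    · simp [hx, (hf x).2]
    · simp [hx, hf₀ hx]

theorem le_sqrt_mul_sqrt_of_forall_pos {x a b : ℝ}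
    (h : ∀ ε > 0, x ≤ √(a + ε) * √(b + ε)) : x ≤ √a * √b := by
  have hlim : Tendsto (fun ε => √(a + ε) * √(b + ε)) (𝓝[>] 0) (𝓝 (√a * √b)) := by
    have : Continuous fun ε : ℝ => √(a + ε) * √(b + ε) := by fun_prop
    simpa using (this.tendsto 0).mono_left nhdsWithin_le_nhds
  exact ge_of_tendsto hlim (eventually_mem_nhdsWithin.mono h)

namespace MeasureTheory

variable {X : Type*} [MeasurableSpace X] {μ : Measure X} {f : X → ℝ} {s : Set X}

theorem measureReal_le_integral_of_indicator_le (hs : MeasurableSet s) (hf : Integrable f μ)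
    (h : s.indicator 1 ≤ f) : μ.real s ≤ ∫ x, f x ∂μ := by
  rw [← integral_indicator_one hs]
  exact integral_mono_of_nonneg (.of_forall (indicator_nonneg fun _ _ => zero_le_one))
    hf (.of_forall h)

theorem integral_le_measureReal_of_le_indicator (hs : MeasurableSet s) (hμs : μ s ≠ ∞)
    (hf : 0 ≤ f) (h : f ≤ s.indicator 1) : ∫ x, f x ∂μ ≤ μ.real s := by
  rw [← integral_indicator_one hs]
  exact integral_mono_of_nonneg (.of_forall hf)
    ((integrable_indicator_iff hs).2 (integrableOn_const hμs)) (.of_forall h)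

variable [TopologicalSpace X] [IsFiniteMeasure μ]

theorem _root_.Set.exists_isOpen_measureReal_lt_add [μ.OuterRegular] (s : Set X) {ε : ℝ}
    (hε : 0 < ε) : ∃ U ⊇ s, IsOpen U ∧ μ.real U < μ.real s + ε := by
  obtain ⟨U, hsU, hU, hμU⟩ := s.exists_isOpen_lt_of_lt (ENNReal.ofReal (μ.real s + ε))
    ((ENNReal.lt_ofReal_iff_toReal_lt (measure_ne_top μ s)).2 (lt_add_of_pos_right _ hε))
  exact ⟨U, hsU, hU, ENNReal.toReal_lt_of_lt_ofReal hμU⟩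

theorem _root_.MeasurableSet.exists_isClosed_measureReal_lt_add [μ.WeaklyRegular]
    (hs : MeasurableSet s) {ε : ℝ} (hε : 0 < ε) :
    ∃ K ⊆ s, IsClosed K ∧ μ.real s < μ.real K + ε := by
  obtain ⟨K, hKs, hK, hμK⟩ := hs.exists_isClosed_lt_add (measure_ne_top μ s)
    (ENNReal.ofReal_pos.2 hε).ne'
  refine ⟨K, hKs, hK, ?_⟩
  rwa [← ENNReal.toReal_ofReal hε.le, measureReal_def, measureReal_def, ← ENNReal.toReal_add
    (measure_ne_top μ K) ENNReal.ofReal_ne_top, ENNReal.toReal_lt_toReal (measure_ne_top μ s)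
    (by finiteness)]

end MeasureTheory

section

variable {X : Type*} [TopologicalSpace X] [MeasurableSpace X] {ξ σ lam : Measure X}
  [IsFiniteMeasure ξ] [IsFiniteMeasure σ] [IsFiniteMeasure lam]

theorem measureReal_le_sqrt_mul_sqrt_of_isClosed_subset_isOpen [CompactSpace X]
    [NormalSpace X] [OpensMeasurableSpace X]
    (h : ∀ w : C(X, ℝ), (∀ x, 0 ≤ w x) →
      ∫ x, w x ∂ξ ≤ √(∫ x, w x ∂σ) * √(∫ x, w x ∂lam))
    {K U : Set X} (hK : IsClosed K) (hU : IsOpen U) (hKU : K ⊆ U) :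
    ξ.real K ≤ √(σ.real U) * √(lam.real U) := by
  obtain ⟨f, hKf, hfU⟩ := exists_continuous_indicator_le_le_indicator hK hU hKU
  have hf₀ : 0 ≤ ⇑f := fun x => (indicator_nonneg (fun _ _ => zero_le_one) x).trans (hKf x)
  have hf_int : Integrable f ξ :=
    f.continuous.integrable_of_hasCompactSupport (.of_compactSpace f)
  calc ξ.real K ≤ ∫ x, f x ∂ξ :=
        measureReal_le_integral_of_indicator_le hK.measurableSet hf_int hKf
    _ ≤ √(∫ x, f x ∂σ) * √(∫ x, f x ∂lam) := h f hf₀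
    _ ≤ √(σ.real U) * √(lam.real U) := by
      gcongr <;> exact integral_le_measureReal_of_le_indicator hU.measurableSet
        (measure_ne_top _ _) hf₀ hfU

theorem measureReal_le_sqrt_mul_sqrt_of_isClosed_isOpen [ξ.WeaklyRegular] [σ.OuterRegular]
    [lam.OuterRegular] (H : ∀ K U : Set X, IsClosed K → IsOpen U → K ⊆ U →
      ξ.real K ≤ √(σ.real U) * √(lam.real U))
    {s : Set X} (hs : MeasurableSet s) : ξ.real s ≤ √(σ.real s) * √(lam.real s) := by
  refine le_of_forall_pos_le_add fun ε hε => ?_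
  obtain ⟨K, hKs, hK, hξK⟩ := hs.exists_isClosed_measureReal_lt_add (μ := ξ) hε
  refine hξK.le.trans (add_le_add_left ?_ ε)
  refine le_sqrt_mul_sqrt_of_forall_pos fun δ hδ => ?_
  obtain ⟨U₁, hsU₁, hU₁, hσU₁⟩ := s.exists_isOpen_measureReal_lt_add (μ := σ) hδ
  obtain ⟨U₂, hsU₂, hU₂, hlamU₂⟩ := s.exists_isOpen_measureReal_lt_add (μ := lam) hδ
  calc ξ.real K ≤ √(σ.real (U₁ ∩ U₂)) * √(lam.real (U₁ ∩ U₂)) :=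
        H K _ hK (hU₁.inter hU₂) (subset_inter (hKs.trans hsU₁) (hKs.trans hsU₂))
    _ ≤ √(σ.real s + δ) * √(lam.real s + δ) := by
      gcongr
      · exact (measureReal_mono inter_subset_left).trans hσU₁.le
      · exact (measureReal_mono inter_subset_right).trans hlamU₂.le

end

/-- If `∫ w dξ ≤ √(∫ w dσ) √(∫ w dλ)` for every nonnegative continuous `w` on a compact
metric space, then `ξ(A) ≤ √(σ(A)) √(λ(A))` for every Borel set `A`. -/
theorem measure_cauchy_schwarz_of_continuous_test
    {X : Type*} [MetricSpace X] [CompactSpace X] [MeasurableSpace X] [BorelSpace X]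
    (ξ σ lam : Measure X)
    [IsFiniteMeasure ξ] [IsFiniteMeasure σ] [IsFiniteMeasure lam]
    (h : ∀ w : C(X, ℝ), (∀ x, 0 ≤ w x) →
      ∫ x, w x ∂ξ ≤ Real.sqrt (∫ x, w x ∂σ) * Real.sqrt (∫ x, w x ∂lam)) :
    ∀ A : Set X, MeasurableSet A →
      (ξ A).toReal ≤ Real.sqrt ((σ A).toReal) * Real.sqrt ((lam A).toReal) := fun _ hA =>
  measureReal_le_sqrt_mul_sqrt_of_isClosed_isOpen
    (fun _ _ hK hU hKU => measureReal_le_sqrt_mul_sqrt_of_isClosed_subset_isOpen h hK hU hKU) hA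
end
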